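/- arXiv:2001.07867 — 6 statements merged into one kernel-verified Lean document; each statement's English description precedes it below -/
import Mathlib

section
/- Suppose n > 3t and each process in a set Π of n processes sends at most one value in {0,1} per round, except for a faulty subset F of size at most t whose members may send both values. Then in any fixed round there is at most one binary value b such that at least n - t distinct processes sent b. -/
/-!
Two sets of at least `n - t` processes out of `n` overlap in at least `n - 2t > t` processes,
so their intersection cannot lie inside the faulty set `F`. A correct process in the overlap
sent both values, hence they coincide.
-/

open Finset

section

variable {α : Type*} [DecidableEq α]

theorem Finset.card_add_card_le_card_add_card_inter {P S₀ S₁ : Finset α}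
    (hS₀ : S₀ ⊆ P) (hS₁ : S₁ ⊆ P) : #S₀ + #S₁ ≤ #P + #(S₀ ∩ S₁) := by
  rw [← card_union_add_card_inter]
  gcongr
  exact union_subset hS₀ hS₁

theorem exists_mem_inter_notMem_of_quorums {P F S₀ S₁ : Finset α} {t : ℕ}
    (ht : 3 * t < #P) (hF : #F ≤ t) (hS₀ : S₀ ⊆ P) (hS₁ : S₁ ⊆ P)
    (h₀ : #P - t ≤ #S₀) (h₁ : #P - t ≤ #S₁) : ∃ p ∈ S₀ ∩ S₁, p ∉ F := by
  have hoverlap := card_add_card_le_card_add_card_inter hS₀ hS₁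
  exact exists_mem_notMem_of_card_lt_card (by omega)

end

theorem at_most_one_quorum_value_general {α : Type*} (P F : Finset α) (n t : ℕ)
    (sent : α → Bool → Prop)
    (hn : P.card = n) (ht : 3 * t < n)
    (hFcard : F.card ≤ t)
    (hnonfaulty : ∀ p ∈ P, p ∉ F → ∀ b₀ b₁ : Bool, sent p b₀ → sent p b₁ → b₀ = b₁) :
    ∀ b₀ b₁ : Bool,
      (∃ S ⊆ P, n - t ≤ S.card ∧ ∀ p ∈ S, sent p b₀) →
      (∃ S ⊆ P, n - t ≤ S.card ∧ ∀ p ∈ S, sent p b₁) →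
      b₀ = b₁ := by
  classical
  subst hn
  rintro b₀ b₁ ⟨S₀, hS₀, hc₀, hsent₀⟩ ⟨S₁, hS₁, hc₁, hsent₁⟩
  obtain ⟨p, hp, hpF⟩ := exists_mem_inter_notMem_of_quorums ht hFcard hS₀ hS₁ hc₀ hc₁
  rw [mem_inter] at hp
  exact hnonfaulty p (hS₀ hp.1) hpF b₀ b₁ (hsent₀ p hp.1) (hsent₁ p hp.2)

theorem at_most_one_quorum_value {α : Type*} [DecidableEq α] (P F : Finset α) (n t : ℕ)
    (sent : α → Bool → Prop)
    (hn : P.card = n) (ht : 3 * t < n)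
    (hF : F ⊆ P) (hFcard : F.card ≤ t)
    (hnonfaulty : ∀ p ∈ P, p ∉ F → ∀ b₀ b₁ : Bool, sent p b₀ → sent p b₁ → b₀ = b₁) :
    ∀ b₀ b₁ : Bool,
      (∃ S ⊆ P, n - t ≤ S.card ∧ ∀ p ∈ S, sent p b₀) →
      (∃ S ⊆ P, n - t ≤ S.card ∧ ∀ p ∈ S, sent p b₁) →
      b₀ = b₁ :=
  at_most_one_quorum_value_general P F n t sent hn ht hFcard hnonfaulty
end

section
/- Suppose n > 3t, F ⊆ Π with |F| ≤ t, and at least n - t distinct processes sent binary value b in round r. Then every set of n - t distinct processes that each sent some value in round r contains at least one non-faulty process that sent b. -/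
namespace Finset

theorem exists_mem_inter_notMem_of_card_add_lt {α : Type*} {A B P F : Finset α}
    (hA : A ⊆ P) (hB : B ⊆ P) (hcard : #P + #F < #A + #B) :
    ∃ p ∈ A, p ∈ B ∧ p ∉ F := by
  classical
  have hunion : #(A ∪ B) ≤ #P := card_le_card (union_subset hA hB)
  have hinter : #F < #(A ∩ B) := by
    have hsum := card_inter_add_card_union A B
    omega
  obtain ⟨p, hpAB, hpF⟩ := exists_mem_notMem_of_card_lt_card hinter
  exact ⟨p, mem_of_mem_inter_left hpAB, mem_of_mem_inter_right hpAB, hpF⟩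

end Finset

theorem quorum_witness_general {α : Type*} (P F : Finset α) (n t : ℕ)
    (sent : α → Bool → Prop) (b : Bool)
    (hn : P.card = n) (ht : 3 * t < n)
    (hFcard : F.card ≤ t)
    (hquorum : ∃ A ⊆ P, n - t ≤ A.card ∧ ∀ p ∈ A, sent p b) :
    ∀ B ⊆ P, n - t ≤ B.card → (∀ p ∈ B, ∃ w : Bool, sent p w) →
      ∃ p ∈ B, p ∉ F ∧ sent p b := by
  intro B hB hBcard _
  obtain ⟨A, hA, hAcard, hAsent⟩ := hquorum
  -- two quorums of size n - t overlap in at least n - 2t > t processes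
  obtain ⟨p, hpA, hpB, hpF⟩ :=
    Finset.exists_mem_inter_notMem_of_card_add_lt (F := F) hA hB (by omega)
  exact ⟨p, hpB, hpF, hAsent p hpA⟩

theorem quorum_witness {α : Type*} [DecidableEq α] (P F : Finset α) (n t : ℕ)
    (sent : α → Bool → Prop) (b : Bool)
    (hn : P.card = n) (ht : 3 * t < n)
    (hF : F ⊆ P) (hFcard : F.card ≤ t)
    (hnonfaulty : ∀ p ∈ P, p ∉ F → ∀ b₀ b₁ : Bool, sent p b₀ → sent p b₁ → b₀ = b₁)
    (hquorum : ∃ A ⊆ P, n - t ≤ A.card ∧ ∀ p ∈ A, sent p b) :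
    ∀ B ⊆ P, n - t ≤ B.card → (∀ p ∈ B, ∃ w : Bool, sent p w) →
      ∃ p ∈ B, p ∉ F ∧ sent p b :=
  quorum_witness_general P F n t sent b hn ht hFcard hquorum
end

section
/- Consider an execution where in each round r ≥ 1 every non-faulty process broadcasts a binary value that is 'valid', where a value v is valid in round 1 iff at least t+1 non-faulty processes proposed v in round 0, and valid in round r > 1 iff either v was broadcast by a non-faulty process in round r-1, or appears in a valid proof chain back to round 0. Then every value broadcast by a non-faulty process in any round r ≥ 1 was proposed by some non-faulty process in round 0. -/
/-!
Since non-faulty processes broadcast only valid values, a value valid in round `r + 1 ≥ 2` is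
already valid in round `r`. Validity is therefore antitone in the round, so every valid value is
valid in round 1, where it is witnessed by `t + 1 ≥ 1` non-faulty proposers of round 0.
-/

section

variable {α : Type*} {P F : Finset α} {sent : ℕ → α → Bool → Prop} {valid : ℕ → Bool → Prop}

theorem valid_succ_le
    (hvalidr : ∀ r : ℕ, 1 < r → ∀ v : Bool, valid r v →
      (∃ p ∈ P, p ∉ F ∧ sent (r - 1) p v) ∨ valid (r - 1) v)
    (hbcast : ∀ r : ℕ, 1 ≤ r → ∀ p ∈ P, p ∉ F → ∀ v : Bool, sent r p v → valid r v)
    {r : ℕ} (hr : 1 ≤ r) : valid (r + 1) ≤ valid r := by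
  intro v hv
  rcases hvalidr (r + 1) (by omega) v hv with ⟨p, hp, hpF, hsent⟩ | hprev
  · exact hbcast r hr p hp hpF v hsent
  · exact hprev

theorem valid_antitoneOn
    (hvalidr : ∀ r : ℕ, 1 < r → ∀ v : Bool, valid r v →
      (∃ p ∈ P, p ∉ F ∧ sent (r - 1) p v) ∨ valid (r - 1) v)
    (hbcast : ∀ r : ℕ, 1 ≤ r → ∀ p ∈ P, p ∉ F → ∀ v : Bool, sent r p v → valid r v) :
    AntitoneOn valid (Set.Ici 1) :=
  antitoneOn_nat_Ici_of_succ_le fun _ hr => valid_succ_le hvalidr hbcast hr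

end

theorem nonfaulty_values_proposed_general {α : Type*} (P F : Finset α) (t : ℕ)
    (sent : ℕ → α → Bool → Prop) (valid : ℕ → Bool → Prop)
    -- a value valid in round 1 was proposed in round 0 by at least t+1 non-faulty processes
    (hvalid1 : ∀ v : Bool, valid 1 v →
      ∃ T ⊆ P, t + 1 ≤ T.card ∧ ∀ p ∈ T, p ∉ F ∧ sent 0 p v)
    -- a value valid in round r > 1 was broadcast by a non-faulty process in round r-1,
    -- or appears in a valid proof chain back to round 0 (i.e. was valid in round r-1)
    (hvalidr : ∀ r : ℕ, 1 < r → ∀ v : Bool, valid r v →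
      (∃ p ∈ P, p ∉ F ∧ sent (r - 1) p v) ∨ valid (r - 1) v)
    -- every non-faulty process broadcasts only valid values in rounds r ≥ 1
    (hbcast : ∀ r : ℕ, 1 ≤ r → ∀ p ∈ P, p ∉ F → ∀ v : Bool, sent r p v → valid r v) :
    ∀ r : ℕ, 1 ≤ r → ∀ p ∈ P, p ∉ F → ∀ v : Bool, sent r p v →
      ∃ q ∈ P, q ∉ F ∧ sent 0 q v := by
  intro r hr p hp hpF v hsent
  have hv1 : valid 1 v :=
    valid_antitoneOn hvalidr hbcast Set.self_mem_Ici hr hr v (hbcast r hr p hp hpF v hsent)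
  obtain ⟨T, hTP, hTcard, hT⟩ := hvalid1 v hv1
  obtain ⟨q, hq⟩ := Finset.card_pos.mp (by omega : 0 < T.card)
  exact ⟨q, hTP hq, hT q hq⟩

/-- Lemma 2 (lem:propose): non-faulty processes only broadcast values proposed by
non-faulty processes in round 0. -/
theorem nonfaulty_values_proposed {α : Type*} [DecidableEq α] (P F : Finset α) (n t : ℕ)
    (sent : ℕ → α → Bool → Prop) (valid : ℕ → Bool → Prop)
    (hn : P.card = n) (ht : 3 * t < n)
    (hF : F ⊆ P) (hFcard : F.card ≤ t)
    -- a value valid in round 1 was proposed in round 0 by at least t+1 non-faulty processes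
    (hvalid1 : ∀ v : Bool, valid 1 v →
      ∃ T ⊆ P, t + 1 ≤ T.card ∧ ∀ p ∈ T, p ∉ F ∧ sent 0 p v)
    -- a value valid in round r > 1 was broadcast by a non-faulty process in round r-1,
    -- or appears in a valid proof chain back to round 0 (i.e. was valid in round r-1)
    (hvalidr : ∀ r : ℕ, 1 < r → ∀ v : Bool, valid r v →
      (∃ p ∈ P, p ∉ F ∧ sent (r - 1) p v) ∨ valid (r - 1) v)
    -- every non-faulty process broadcasts only valid values in rounds r ≥ 1
    (hbcast : ∀ r : ℕ, 1 ≤ r → ∀ p ∈ P, p ∉ F → ∀ v : Bool, sent r p v → valid r v) :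
    ∀ r : ℕ, 1 ≤ r → ∀ p ∈ P, p ∉ F → ∀ v : Bool, sent r p v →
      ∃ q ∈ P, q ∉ F ∧ sent 0 q v :=
  nonfaulty_values_proposed_general P F t sent valid hvalid1 hvalidr hbcast
end

section
/- Consider binary values with validity defined recursively: every value is valid at round 0; v is valid at round 1 iff at least t+1 distinct processes sent v at round 0; for r ≥ 2, letting b = (r-1) mod 2: if v = b then v is valid at round r iff (r = 2 and t+1 distinct processes sent v at round 0) or (n - t distinct processes sent v at round r-2); if v ≠ b then v is valid at round r iff n - t distinct processes sent v at round r-1. If every non-faulty process sends a valid value in every round r ≥ 1 and all non-faulty processes (at least n - t of them, with n > 3t) participate in every round, then for every round r ≥ 1 at least one binary value is valid at round r. -/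
/-!
In round 1, the at least `n - t > 2t` correct processes all sent a bit in round 0, so by
pigeonhole `t + 1` of them agree on one. In a round `r ≥ 2` with parity bit `b`, either `b` was
already valid in round `r - 1`, and then the same quorum that justified it there justifies it
again in round `r`, or it was not, and then every correct process sent `!b` in round `r - 1`,
which is a quorum of `n - t` senders for `!b`.
-/

open Finset

def Quorum {α : Type*} (S : Finset α) (k : ℕ) (q : α → Prop) : Prop :=
  ∃ T ⊆ S, k ≤ T.card ∧ ∀ p ∈ T, q p

theorem Quorum.mono {α : Type*} {S S' : Finset α} {k : ℕ} {q : α → Prop} (hS : S ⊆ S')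
    (h : Quorum S k q) : Quorum S' k q :=
  let ⟨T, hT, hk, hq⟩ := h
  ⟨T, hT.trans hS, hk, hq⟩

theorem exists_quorum_of_forall_exists_bool {α : Type*} {S : Finset α} {q : α → Bool → Prop}
    {k : ℕ} (hq : ∀ p ∈ S, ∃ v, q p v) (hk : 2 * k < S.card) :
    ∃ v, Quorum S (k + 1) (q · v) := by
  classical
  have hcover : S ⊆ S.filter (q · true) ∪ S.filter (q · false) := by
    intro p hp
    obtain ⟨v, hv⟩ := hq p hp
    cases v <;> simp [hp, hv]
  have hsum := (card_le_card hcover).trans (card_union_le _ _)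
  by_cases htrue : k < (S.filter (q · true)).card
  · exact ⟨true, _, filter_subset _ _, htrue, fun p hp => (mem_filter.1 hp).2⟩
  · exact ⟨false, _, filter_subset _ _, by omega, fun p hp => (mem_filter.1 hp).2⟩

theorem forall_not_of_forall_exists_valid {α : Type*} {S : Finset α} {q : α → Bool → Prop}
    {valid : Bool → Prop} {b : Bool} (h : ∀ p ∈ S, ∃ v, q p v ∧ valid v) (hb : ¬ valid b) :
    ∀ p ∈ S, q p (!b) := by
  intro p hp
  obtain ⟨v, hqv, hv⟩ := h p hp
  rwa [← Bool.eq_not_of_ne (fun hvb : v = b => hb (hvb ▸ hv))]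

theorem decide_pred_mod_two_ne {r : ℕ} (hr : 2 ≤ r) :
    decide ((r - 1 - 1) % 2 = 1) ≠ decide ((r - 1) % 2 = 1) := by
  simp only [ne_eq, decide_eq_decide]
  omega

theorem some_value_valid_general {α : Type*} [DecidableEq α] (P F : Finset α) (n t : ℕ)
    (sent : ℕ → α → Bool → Prop) (valid : ℕ → Bool → Prop)
    (ht : 3 * t < n)
    -- v is valid at round 1 iff t+1 distinct processes sent v at round 0
    (h1 : ∀ v : Bool, valid 1 v ↔ ∃ T ⊆ P, t + 1 ≤ T.card ∧ ∀ p ∈ T, sent 0 p v)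
    -- for r ≥ 2, with b = (r-1) mod 2:
    (hr : ∀ r : ℕ, 2 ≤ r → ∀ v : Bool,
      (v = decide ((r - 1) % 2 = 1) →
        (valid r v ↔ ((r = 2 ∧ ∃ T ⊆ P, t + 1 ≤ T.card ∧ ∀ p ∈ T, sent 0 p v) ∨
          (∃ S ⊆ P, n - t ≤ S.card ∧ ∀ p ∈ S, sent (r - 2) p v)))) ∧
      (v ≠ decide ((r - 1) % 2 = 1) →
        (valid r v ↔ ∃ S ⊆ P, n - t ≤ S.card ∧ ∀ p ∈ S, sent (r - 1) p v)))
    -- every non-faulty process sends a valid value in every round r ≥ 1 (including round 0)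
    (hsend : ∀ r : ℕ, ∀ p ∈ P, p ∉ F → ∃ v : Bool, sent r p v ∧ valid r v)
    -- all non-faulty processes participate: there are at least n - t of them
    (hpart : n - t ≤ (P \ F).card) :
    ∀ r : ℕ, 1 ≤ r → ∃ v : Bool, valid r v := by
  have hcorrect : ∀ r, ∀ p ∈ P \ F, ∃ v, sent r p v ∧ valid r v := fun r p hp =>
    hsend r p (mem_sdiff.1 hp).1 (mem_sdiff.1 hp).2
  intro r hr1
  obtain rfl | hr2 := hr1.eq_or_lt
  · obtain ⟨v, hv⟩ := exists_quorum_of_forall_exists_bool (k := t)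
      (fun p hp => (hcorrect 0 p hp).imp fun _ => And.left) (by omega)
    exact ⟨v, (h1 v).2 (hv.mono sdiff_subset)⟩
  set b := decide ((r - 1) % 2 = 1)
  by_cases hb : valid (r - 1) b
  · refine ⟨b, ((hr r hr2 b).1 rfl).2 ?_⟩
    obtain rfl | hr3 := Nat.eq_or_lt_of_le hr2
    · exact Or.inl ⟨rfl, (h1 b).1 hb⟩
    · have hprev := ((hr (r - 1) (by omega) b).2 (decide_pred_mod_two_ne hr2).symm).1 hb
      rw [show r - 1 - 1 = r - 2 by omega] at hprev
      exact Or.inr hprev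
  · refine ⟨!b, ((hr r hr2 !b).2 (Bool.not_ne_self b)).2 ⟨P \ F, sdiff_subset, hpart, ?_⟩⟩
    exact forall_not_of_forall_exists_valid (hcorrect (r - 1)) hb

/-- Lemma 4 (lem:enough): in every round r ≥ 1 at least one binary value is valid. -/
theorem some_value_valid {α : Type*} [DecidableEq α] (P F : Finset α) (n t : ℕ)
    (sent : ℕ → α → Bool → Prop) (valid : ℕ → Bool → Prop)
    (hn : P.card = n) (ht : 3 * t < n)
    (hF : F ⊆ P) (hFcard : F.card ≤ t)
    -- every value is valid at round 0
    (h0 : ∀ v : Bool, valid 0 v)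
    -- v is valid at round 1 iff t+1 distinct processes sent v at round 0
    (h1 : ∀ v : Bool, valid 1 v ↔ ∃ T ⊆ P, t + 1 ≤ T.card ∧ ∀ p ∈ T, sent 0 p v)
    -- for r ≥ 2, with b = (r-1) mod 2:
    (hr : ∀ r : ℕ, 2 ≤ r → ∀ v : Bool,
      (v = decide ((r - 1) % 2 = 1) →
        (valid r v ↔ ((r = 2 ∧ ∃ T ⊆ P, t + 1 ≤ T.card ∧ ∀ p ∈ T, sent 0 p v) ∨
          (∃ S ⊆ P, n - t ≤ S.card ∧ ∀ p ∈ S, sent (r - 2) p v)))) ∧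
      (v ≠ decide ((r - 1) % 2 = 1) →
        (valid r v ↔ ∃ S ⊆ P, n - t ≤ S.card ∧ ∀ p ∈ S, sent (r - 1) p v)))
    -- every non-faulty process sends a valid value in every round r ≥ 1 (including round 0)
    (hsend : ∀ r : ℕ, ∀ p ∈ P, p ∉ F → ∃ v : Bool, sent r p v ∧ valid r v)
    -- all non-faulty processes participate: there are at least n - t of them
    (hpart : n - t ≤ (P \ F).card) :
    ∀ r : ℕ, 1 ≤ r → ∃ v : Bool, valid r v :=
  some_value_valid_general P F n t sent valid ht h1 hr hsend hpart
end

section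
/- Let n > 3t. Suppose no set of n - t distinct processes all sent value w in round r. Then in round r + 1 the value w fails the validity rule 'n - t messages for w from the previous round', and in round r + 2 (where w equals the parity (r+1) mod 2 case requiring n - t messages from round r) w also fails validity; hence if non-faulty processes only broadcast valid values, no non-faulty process broadcasts w in rounds r + 1 or r + 2, and by induction w is invalid in all rounds after r. -/
/-!
Any set of `n - t` senders contains a non-faulty process, because at most `t < n - t` processes
are faulty. In a round `r' > r`, the rule makes `w` valid only through a quorum for `w` in round
`r' - 1` or `r' - 2`; the look-back of two rounds applies only when `w` is the parity of round
`r' - 1`, which rules out reaching round `r - 1` from round `r + 1`. So every such quorum lies in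
a round `≥ r`, and strong induction from the missing quorum in round `r` shows that no round
`≥ r` has a quorum for `w`: `w` is never valid after `r`, and non-faulty processes never send it.
-/

def HasQuorum {α : Type*} (P : Finset α) (q : ℕ) (holds : α → Prop) : Prop :=
  ∃ S ⊆ P, q ≤ S.card ∧ ∀ p ∈ S, holds p

/-- The validity rule of Figure 2 for rounds `r > 2`. -/
def ValidByRule {α : Type*} (P : Finset α) (q : ℕ) (sent : ℕ → α → Bool → Prop) (r : ℕ)
    (v : Bool) : Prop :=
  (v = decide ((r - 1) % 2 = 1) ∧ HasQuorum P q (sent (r - 2) · v)) ∨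
    (v ≠ decide ((r - 1) % 2 = 1) ∧ HasQuorum P q (sent (r - 1) · v))

theorem not_hasQuorum_of_nonfaulty_silent {α : Type*} {P F : Finset α} {n t : ℕ}
    {holds : α → Prop} (ht : 2 * t < n) (hFcard : F.card ≤ t)
    (hsilent : ∀ p ∈ P, p ∉ F → ¬ holds p) : ¬ HasQuorum P (n - t) holds := by
  rintro ⟨S, hSP, hcard, hS⟩
  have hSF : S ⊆ F := fun p hp => by_contra fun hpF => hsilent p (hSP hp) hpF (hS p hp)
  have := Finset.card_le_card hSF
  omega

theorem not_validByRule_of_no_quorum_since {α : Type*} {P : Finset α} {q r r' : ℕ}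
    {sent : ℕ → α → Bool → Prop} {w : Bool} (hw : w = decide ((r + 1) % 2 = 1)) (hrr' : r < r')
    (hnoq : ∀ m, r ≤ m → m < r' → ¬ HasQuorum P q (sent m · w)) :
    ¬ ValidByRule P q sent r' w := by
  rintro (⟨hpar, hquorum⟩ | ⟨-, hquorum⟩)
  · obtain rfl | hlt : r' = r + 1 ∨ r + 1 < r' := by omega
    · rw [hw, Nat.add_sub_cancel, decide_eq_decide] at hpar
      omega
    · exact hnoq (r' - 2) (by omega) (by omega) hquorum
  · exact hnoq (r' - 1) (by omega) (by omega) hquorum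

theorem not_hasQuorum_since {α : Type*} {P F : Finset α} {n t r : ℕ}
    {sent : ℕ → α → Bool → Prop} {valid : ℕ → Bool → Prop} {w : Bool}
    (ht : 2 * t < n) (hFcard : F.card ≤ t) (hr : 2 < r) (hw : w = decide ((r + 1) % 2 = 1))
    (hbcast : ∀ r' : ℕ, ∀ p ∈ P, p ∉ F → ∀ v : Bool, sent r' p v → valid r' v)
    (hvalid : ∀ r' : ℕ, 2 < r' → ∀ v : Bool, valid r' v → ValidByRule P (n - t) sent r' v)
    (hnoq : ¬ HasQuorum P (n - t) (sent r · w)) :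
    ∀ m, r ≤ m → ¬ HasQuorum P (n - t) (sent m · w) := by
  intro m
  induction m using Nat.strong_induction_on with
  | _ m IH =>
    intro hrm
    rcases hrm.eq_or_lt with rfl | hrm
    · exact hnoq
    · have hnv : ¬ valid m w := fun hv =>
        not_validByRule_of_no_quorum_since hw hrm (fun k hrk hkm => IH k hkm hrk)
          (hvalid m (by omega) w hv)
      exact not_hasQuorum_of_nonfaulty_silent ht hFcard fun p hp hpF hs =>
        hnv (hbcast m p hp hpF w hs)

theorem invalidity_persists_general {α : Type*} (P F : Finset α) (n t r : ℕ)
    (sent : ℕ → α → Bool → Prop) (valid : ℕ → Bool → Prop) (w : Bool)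
    (ht : 3 * t < n)
    (hFcard : F.card ≤ t)
    (hr : 2 < r)
    (hw : w = decide ((r + 1) % 2 = 1))
    -- non-faulty processes broadcast only valid values
    (hbcast : ∀ r' : ℕ, ∀ p ∈ P, p ∉ F → ∀ v : Bool, sent r' p v → valid r' v)
    -- validity rules for rounds > 2 (special round-0/round-2 cases do not apply)
    (hvalid : ∀ r' : ℕ, 2 < r' → ∀ v : Bool, valid r' v ↔
      ((v = decide ((r' - 1) % 2 = 1) ∧ ∃ S ⊆ P, n - t ≤ S.card ∧ ∀ p ∈ S, sent (r' - 2) p v) ∨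
       (v ≠ decide ((r' - 1) % 2 = 1) ∧ ∃ S ⊆ P, n - t ≤ S.card ∧ ∀ p ∈ S, sent (r' - 1) p v)))
    -- no quorum for w in round r
    (hnoq : ¬ ∃ S ⊆ P, n - t ≤ S.card ∧ ∀ p ∈ S, sent r p w) :
    ∀ r' : ℕ, r < r' → ¬ valid r' w ∧ ∀ p ∈ P, p ∉ F → ¬ sent r' p w := by
  have hrule : ∀ r', 2 < r' → ∀ v, valid r' v → ValidByRule P (n - t) sent r' v :=
    fun r' hr' v => (hvalid r' hr' v).1
  have hnoq_since := not_hasQuorum_since (by omega) hFcard hr hw hbcast hrule hnoq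
  intro r' hrr'
  have hnv : ¬ valid r' w := fun hv =>
    not_validByRule_of_no_quorum_since hw hrr' (fun m hrm _ => hnoq_since m hrm)
      (hrule r' (by omega) w hv)
  exact ⟨hnv, fun p hp hpF hs => hnv (hbcast r' p hp hpF w hs)⟩

/-- Persistence of invalidity (inside Lemma 3): a value w that misses its quorum in round r
(with w = (r+1) mod 2) is invalid, and never broadcast by non-faulty processes, in every
round after r. -/
theorem invalidity_persists {α : Type*} [DecidableEq α] (P F : Finset α) (n t r : ℕ)
    (sent : ℕ → α → Bool → Prop) (valid : ℕ → Bool → Prop) (w : Bool)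
    (hn : P.card = n) (ht : 3 * t < n)
    (hF : F ⊆ P) (hFcard : F.card ≤ t)
    (hr : 2 < r)
    (hw : w = decide ((r + 1) % 2 = 1))
    -- non-faulty processes broadcast at most one value per round
    (hnonfaulty : ∀ r' : ℕ, ∀ p ∈ P, p ∉ F →
      ∀ b₀ b₁ : Bool, sent r' p b₀ → sent r' p b₁ → b₀ = b₁)
    -- non-faulty processes broadcast only valid values
    (hbcast : ∀ r' : ℕ, ∀ p ∈ P, p ∉ F → ∀ v : Bool, sent r' p v → valid r' v)
    -- validity rules for rounds > 2 (special round-0/round-2 cases do not apply)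
    (hvalid : ∀ r' : ℕ, 2 < r' → ∀ v : Bool, valid r' v ↔
      ((v = decide ((r' - 1) % 2 = 1) ∧ ∃ S ⊆ P, n - t ≤ S.card ∧ ∀ p ∈ S, sent (r' - 2) p v) ∨
       (v ≠ decide ((r' - 1) % 2 = 1) ∧ ∃ S ⊆ P, n - t ≤ S.card ∧ ∀ p ∈ S, sent (r' - 1) p v)))
    -- no quorum for w in round r
    (hnoq : ¬ ∃ S ⊆ P, n - t ≤ S.card ∧ ∀ p ∈ S, sent r p w) :
    ∀ r' : ℕ, r < r' → ¬ valid r' w ∧ ∀ p ∈ P, p ∉ F → ¬ sent r' p w :=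
  invalidity_persists_general P F n t r sent valid w ht hFcard hr hw hbcast hvalid hnoq
end

section
/- Suppose all non-faulty processes propose the same value v in round 0, the faulty set F has |F| ≤ t, and n > 3t. Then no t + 1 distinct processes sent ¬v in round 0, so ¬v is not valid at round 1, and inductively ¬v is not valid (and not decided) in any round r ≥ 1; hence only v can be decided. -/
/-!
A correct process proposes only `v`, so every round-0 sender of `!v` is faulty; with at most
`t` faulty processes, `!v` cannot gather `t + 1` round-0 senders, and since `n - t > t` it
cannot gather a quorum of `n - t` senders either. Every validity rule for a round `r ≥ 1`
points back to such a round-0 set or to a quorum of senders in an earlier round; a quorum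
contains a correct process, which sends only values valid in that round. Strong induction on
`r` therefore shows that `!v` is never valid, hence never gathers a deciding quorum.
-/

namespace UnanimousValidity

variable {α : Type*} (P : Finset α) (sent : ℕ → α → Bool → Prop)

def HasSenders (k r : ℕ) (w : Bool) : Prop :=
  ∃ S ⊆ P, k ≤ S.card ∧ ∀ p ∈ S, sent r p w

variable {P sent}

theorem HasSenders.exists_sender_not_mem {F : Finset α} {k r : ℕ} {w : Bool}
    (h : HasSenders P sent k r w) (hF : F.card < k) : ∃ p ∈ P, p ∉ F ∧ sent r p w := by
  obtain ⟨S, hSP, hSk, hS⟩ := h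
  obtain ⟨p, hpS, hpF⟩ := Finset.exists_mem_notMem_of_card_lt_card (hF.trans_le hSk)
  exact ⟨p, hSP hpS, hpF, hS p hpS⟩

theorem hasSenders_of_valid {n t : ℕ} {valid : ℕ → Bool → Prop}
    (h1 : ∀ w : Bool, valid 1 w ↔ HasSenders P sent (t + 1) 0 w)
    (hrv : ∀ r : ℕ, 2 ≤ r → ∀ w : Bool,
      (w = decide ((r - 1) % 2 = 1) →
        (valid r w ↔ ((r = 2 ∧ HasSenders P sent (t + 1) 0 w) ∨
          HasSenders P sent (n - t) (r - 2) w))) ∧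
      (w ≠ decide ((r - 1) % 2 = 1) → (valid r w ↔ HasSenders P sent (n - t) (r - 1) w)))
    {r : ℕ} (hr : 1 ≤ r) {w : Bool} (hval : valid r w) :
    HasSenders P sent (t + 1) 0 w ∨ ∃ s < r, HasSenders P sent (n - t) s w := by
  obtain rfl | hr2 : r = 1 ∨ 2 ≤ r := by omega
  · exact .inl ((h1 w).mp hval)
  by_cases hw : w = decide ((r - 1) % 2 = 1)
  · rcases ((hrv r hr2 w).1 hw).mp hval with ⟨-, h0⟩ | hS
    · exact .inl h0
    · exact .inr ⟨r - 2, by omega, hS⟩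
  · exact .inr ⟨r - 1, by omega, ((hrv r hr2 w).2 hw).mp hval⟩

theorem not_valid_of_no_correct_initial_sender {F : Finset α} {n t : ℕ}
    {valid : ℕ → Bool → Prop} {w : Bool} (hFt : F.card ≤ t) (htn : 2 * t < n)
    (hbcast : ∀ r : ℕ, 1 ≤ r → ∀ p ∈ P, p ∉ F → sent r p w → valid r w)
    (hinit : ∀ p ∈ P, p ∉ F → ¬ sent 0 p w)
    (htrace : ∀ r : ℕ, 1 ≤ r → valid r w →
      HasSenders P sent (t + 1) 0 w ∨ ∃ s < r, HasSenders P sent (n - t) s w) :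
    ∀ r : ℕ, 1 ≤ r → ¬ valid r w := by
  have hround0 : ∀ k, F.card < k → ¬ HasSenders P sent k 0 w := fun k hk h => by
    obtain ⟨p, hp, hpF, hs⟩ := h.exists_sender_not_mem hk
    exact hinit p hp hpF hs
  intro r
  induction r using Nat.strong_induction_on with
  | _ r ih =>
    intro hr hval
    rcases htrace r hr hval with h0 | ⟨s, hsr, hS⟩
    · exact hround0 _ (by omega) h0
    obtain rfl | hs : s = 0 ∨ 1 ≤ s := by omega
    · exact hround0 _ (by omega) hS
    obtain ⟨p, hp, hpF, hsent⟩ := hS.exists_sender_not_mem (F := F) (by omega)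
    exact ih s hsr hs (hbcast s hs p hp hpF hsent)

end UnanimousValidity

open UnanimousValidity in
theorem unanimous_validity_general {α : Type*} (P F : Finset α) (n t : ℕ)
    (sent : ℕ → α → Bool → Prop) (valid : ℕ → Bool → Prop) (v : Bool)
    (ht : 3 * t < n)
    (hFcard : F.card ≤ t)
    -- all non-faulty processes propose v (and only v) in round 0
    (hprop : ∀ p ∈ P, p ∉ F → sent 0 p v ∧ ∀ w : Bool, sent 0 p w → w = v)
    -- validity at round 1 requires t + 1 round-0 senders
    (h1 : ∀ w : Bool, valid 1 w ↔ ∃ T ⊆ P, t + 1 ≤ T.card ∧ ∀ p ∈ T, sent 0 p w)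
    -- validity rules for rounds r ≥ 2
    (hrv : ∀ r : ℕ, 2 ≤ r → ∀ w : Bool,
      (w = decide ((r - 1) % 2 = 1) →
        (valid r w ↔ ((r = 2 ∧ ∃ T ⊆ P, t + 1 ≤ T.card ∧ ∀ p ∈ T, sent 0 p w) ∨
          (∃ S ⊆ P, n - t ≤ S.card ∧ ∀ p ∈ S, sent (r - 2) p w)))) ∧
      (w ≠ decide ((r - 1) % 2 = 1) →
        (valid r w ↔ ∃ S ⊆ P, n - t ≤ S.card ∧ ∀ p ∈ S, sent (r - 1) p w)))
    -- non-faulty processes send only valid values in rounds r ≥ 1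
    (hbcast : ∀ r : ℕ, 1 ≤ r → ∀ p ∈ P, p ∉ F → ∀ w : Bool, sent r p w → valid r w) :
    (¬ ∃ T ⊆ P, t + 1 ≤ T.card ∧ ∀ p ∈ T, sent 0 p (!v)) ∧
    (∀ r : ℕ, 1 ≤ r → ¬ valid r (!v)) ∧
    (∀ r : ℕ, 1 ≤ r → ¬ ∃ S ⊆ P, n - t ≤ S.card ∧ ∀ p ∈ S, sent r p (!v)) := by
  have hinit : ∀ p ∈ P, p ∉ F → ¬ sent 0 p (!v) := fun p hp hpF hs => by
    simpa using (hprop p hp hpF).2 _ hs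
  have hnot_valid : ∀ r : ℕ, 1 ≤ r → ¬ valid r (!v) :=
    not_valid_of_no_correct_initial_sender hFcard (by omega)
      (fun r hr p hp hpF => hbcast r hr p hp hpF _) hinit
      (fun _ hr hval => hasSenders_of_valid h1 hrv hr hval)
  refine ⟨fun h0 => ?_, hnot_valid, fun r hr hS => ?_⟩
  · obtain ⟨p, hp, hpF, hs⟩ := HasSenders.exists_sender_not_mem (F := F) h0 (by omega)
    exact hinit p hp hpF hs
  · obtain ⟨p, hp, hpF, hs⟩ := HasSenders.exists_sender_not_mem (F := F) hS (by omega)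
    exact hnot_valid r hr (hbcast r hr p hp hpF _ hs)

/-- BBC-Validity: if all non-faulty processes propose the same value v, then ¬v is never
valid and never gathers a deciding quorum in any round r ≥ 1. -/
theorem unanimous_validity {α : Type*} [DecidableEq α] (P F : Finset α) (n t : ℕ)
    (sent : ℕ → α → Bool → Prop) (valid : ℕ → Bool → Prop) (v : Bool)
    (hn : P.card = n) (ht : 3 * t < n)
    (hF : F ⊆ P) (hFcard : F.card ≤ t)
    -- all non-faulty processes propose v (and only v) in round 0
    (hprop : ∀ p ∈ P, p ∉ F → sent 0 p v ∧ ∀ w : Bool, sent 0 p w → w = v)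
    -- validity at round 1 requires t + 1 round-0 senders
    (h1 : ∀ w : Bool, valid 1 w ↔ ∃ T ⊆ P, t + 1 ≤ T.card ∧ ∀ p ∈ T, sent 0 p w)
    -- validity rules for rounds r ≥ 2
    (hrv : ∀ r : ℕ, 2 ≤ r → ∀ w : Bool,
      (w = decide ((r - 1) % 2 = 1) →
        (valid r w ↔ ((r = 2 ∧ ∃ T ⊆ P, t + 1 ≤ T.card ∧ ∀ p ∈ T, sent 0 p w) ∨
          (∃ S ⊆ P, n - t ≤ S.card ∧ ∀ p ∈ S, sent (r - 2) p w)))) ∧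
      (w ≠ decide ((r - 1) % 2 = 1) →
        (valid r w ↔ ∃ S ⊆ P, n - t ≤ S.card ∧ ∀ p ∈ S, sent (r - 1) p w)))
    -- non-faulty processes send only valid values in rounds r ≥ 1
    (hbcast : ∀ r : ℕ, 1 ≤ r → ∀ p ∈ P, p ∉ F → ∀ w : Bool, sent r p w → valid r w) :
    (¬ ∃ T ⊆ P, t + 1 ≤ T.card ∧ ∀ p ∈ T, sent 0 p (!v)) ∧
    (∀ r : ℕ, 1 ≤ r → ¬ valid r (!v)) ∧
    (∀ r : ℕ, 1 ≤ r → ¬ ∃ S ⊆ P, n - t ≤ S.card ∧ ∀ p ∈ S, sent r p (!v)) :=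
  unanimous_validity_general P F n t sent valid v ht hFcard hprop h1 hrv hbcast
end
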